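/- Let σ be a morphism on a finite alphabet A prolongable on a, with infinite fixed point u = σ^ω(a) and all letters of A occurring in u, and suppose the spectral radius θ of the incidence matrix M_σ satisfies θ > 1. Then lim inf_{N→∞} |σ(u₁u₂⋯u_N)|/N > 1, where u₁⋯u_N denotes the prefix of u of length N. -/

import Mathlib

/-- `w` is a prefix of the infinite word `a`. -/
def IsPrefOf {A : Type*} (w : List A) (a : ℕ → A) : Prop :=
  ∀ i : Fin w.length, w.get i = a i

/-- Fractional power `V^α`: `V^⌊α⌋` followed by the prefix of `V`
of length `⌈{α}·|V|⌉`. -/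
noncomputable def fracPow {A : Type*} (V : List A) (α : ℝ) : List A :=
  (List.replicate ⌊α⌋₊ V).flatten ++ V.take ⌈Int.fract α * V.length⌉₊

/-- The set of admissible exponents in the definition of the Diophantine exponent. -/
def dioSet {A : Type*} (a : ℕ → A) : Set ℝ :=
  {ρ | ∀ N : ℕ, ∃ (U V : List A) (α : ℝ), V ≠ [] ∧ 1 ≤ α ∧
    IsPrefOf (U ++ fracPow V α) a ∧ N ≤ (U ++ fracPow V α).length ∧
    ρ ≤ ((U ++ fracPow V α).length : ℝ) / ((U.length : ℝ) + (V.length : ℝ))}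

/-- Diophantine exponent of an infinite word. -/
noncomputable def dio {A : Type*} (a : ℕ → A) : EReal :=
  sSup ((fun ρ : ℝ => (ρ : EReal)) '' dioSet a)

/-- Action of a morphism (given by its values on letters) on a finite word. -/
def mapW {A : Type*} (σ : A → List A) (w : List A) : List A := w.flatMap σ

/-- `n`-th iterate of a morphism applied to a word. -/
def iterW {A : Type*} (σ : A → List A) (n : ℕ) (w : List A) : List A :=
  (mapW σ)^[n] w

/-- `σ` is prolongable on the letter `a`. -/
def Prolongable {A : Type*} (σ : A → List A) (a : A) : Prop :=
  (∃ W : List A, W ≠ [] ∧ σ a = a :: W) ∧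
  Filter.Tendsto (fun n => (iterW σ n [a]).length) Filter.atTop Filter.atTop

/-- The letter `b` has maximal growth for `σ`. -/
def MaxGrowth {A : Type*} (σ : A → List A) (b : A) : Prop :=
  ∃ C : ℝ, ∀ c : A, ∀ n : ℕ, 1 ≤ n →
    ((iterW σ n [c]).length : ℝ) < C * ((iterW σ n [b]).length : ℝ)

/-- Incidence matrix of a morphism, viewed over `ℂ`. -/
noncomputable def incMat {A : Type*} [Fintype A] [DecidableEq A]
    (σ : A → List A) : Matrix A A ℂ :=
  fun i j => ((σ j).count i : ℂ)

/-- Spectral radius of the incidence matrix of a morphism. -/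
noncomputable def specRad {A : Type*} [Fintype A] [DecidableEq A]
    (σ : A → List A) : ℝ :=
  sSup ((fun μ : ℂ => ‖μ‖) '' spectrum ℂ (incMat σ))

/-
Call a letter `c` subexponential if `|σⁿ(c)| = O(rⁿ)` for every `r > 1`, and exponential otherwise.
Gershgorin's theorem applied to `M_σⁿ` bounds `|μ|ⁿ` by `∑_c |σⁿ(c)|` for every eigenvalue `μ`, so
`θ > 1` forces an exponential letter. Every exponential letter has an exponential letter in its
image, so the number `eₙ(w)` of exponential letters in `σⁿ(w)` doubles after a fixed number of steps
and grows like `ρⁿ` for some `ρ > 1`. The subexponential letters of `σⁿ(w)` are produced by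
exponential letters and afterwards grow at a rate `r < ρ`; hence `|σⁿ(w)| = O(eₙ(w))` as soon as `w`
contains an exponential letter, and `|σ^(m+K)(a)| ≥ 2 |σ^m(a)|` for large `m`.

Put `L(N) = |σ(u₁⋯u_N)|`, so that `L^m(1) = |σ^m(a)|`. `L` is monotone and
`L(N + d) ≤ L(N) + S d` with `S = max |σ(c)|`, hence
`L^k(N) ≤ N + (1 + S + ⋯ + S^(k-1)) (L(N) - N)`. Choosing `m` with `|σ^m(a)| ≤ N < |σ^(m+1)(a)|`
gives `L^(K+1)(N) > 2N`, so `L(N) ≥ (1 + 1/c) N` for a constant `c`.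
-/

open Filter

namespace DilationFactor

variable {A : Type*} (σ : A → List A)

theorem mapW_append (v w : List A) : mapW σ (v ++ w) = mapW σ v ++ mapW σ w :=
  List.flatMap_append

theorem mapW_cons (x : A) (w : List A) : mapW σ (x :: w) = σ x ++ mapW σ w :=
  List.flatMap_cons ..

theorem mapW_singleton (x : A) : mapW σ [x] = σ x :=
  List.flatMap_singleton ..

theorem iterW_zero (w : List A) : iterW σ 0 w = w := rfl

theorem iterW_succ (n : ℕ) (w : List A) : iterW σ (n + 1) w = iterW σ n (mapW σ w) :=
  Function.iterate_succ_apply ..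

theorem iterW_succ' (n : ℕ) (w : List A) : iterW σ (n + 1) w = mapW σ (iterW σ n w) :=
  Function.iterate_succ_apply' ..

theorem iterW_add (m n : ℕ) (w : List A) : iterW σ (m + n) w = iterW σ m (iterW σ n w) :=
  Function.iterate_add_apply ..

theorem iterW_succ_singleton (n : ℕ) (x : A) : iterW σ (n + 1) [x] = iterW σ n (σ x) := by
  rw [iterW_succ, mapW_singleton]

theorem iterW_nil (n : ℕ) : iterW σ n [] = [] := by
  induction n with
  | zero => rfl
  | succ n ih => rw [iterW_succ', ih]; rfl

theorem iterW_append (n : ℕ) (v w : List A) :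
    iterW σ n (v ++ w) = iterW σ n v ++ iterW σ n w := by
  induction n generalizing v w with
  | zero => rfl
  | succ n ih => rw [iterW_succ, iterW_succ, iterW_succ, mapW_append, ih]

theorem iterW_cons (n : ℕ) (x : A) (w : List A) :
    iterW σ n (x :: w) = iterW σ n [x] ++ iterW σ n w :=
  iterW_append σ n [x] w

theorem length_iterW_le_of_forall_mem {n : ℕ} {w : List A} {B : ℝ}
    (h : ∀ y ∈ w, ((iterW σ n [y]).length : ℝ) ≤ B) :
    ((iterW σ n w).length : ℝ) ≤ w.length * B := by
  induction w with
  | nil => simp [iterW_nil]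
  | cons x w ih =>
    rw [iterW_cons, List.length_append, List.length_cons]
    push_cast
    linarith [h x List.mem_cons_self, ih fun y hy => h y (List.mem_cons_of_mem x hy)]

def HasSubexpGrowth (c : A) : Prop :=
  ∀ r : ℝ, 1 < r → ∃ C : ℝ, ∀ n : ℕ, ((iterW σ n [c]).length : ℝ) ≤ C * r ^ n

theorem exists_subexpGrowth_bound [Finite A] {r : ℝ} (hr : 1 < r) :
    ∃ C : ℝ, 0 ≤ C ∧
      ∀ d, HasSubexpGrowth σ d → ∀ n, ((iterW σ n [d]).length : ℝ) ≤ C * r ^ n := by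
  have hd : ∀ d, ∀ᶠ C in atTop,
      HasSubexpGrowth σ d → ∀ n, ((iterW σ n [d]).length : ℝ) ≤ C * r ^ n := by
    intro d
    by_cases hd : HasSubexpGrowth σ d
    · obtain ⟨C₀, hC₀⟩ := hd r hr
      filter_upwards [eventually_ge_atTop C₀] with C hC _ n
      exact (hC₀ n).trans (by gcongr)
    · exact Eventually.of_forall fun _ h => absurd h hd
  obtain ⟨C, hC, hC0⟩ := ((eventually_all.2 hd).and (eventually_ge_atTop 0)).exists
  exact ⟨C, hC0, hC⟩

theorem exists_mem_not_hasSubexpGrowth [Finite A] {c : A} (hc : ¬HasSubexpGrowth σ c) :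
    ∃ x ∈ σ c, ¬HasSubexpGrowth σ x := by
  by_contra! h
  refine hc fun r hr => ?_
  obtain ⟨C, hC0, hC⟩ := exists_subexpGrowth_bound σ hr
  refine ⟨1 + (σ c).length * C, fun n => ?_⟩
  cases n with
  | zero => norm_num [iterW]; positivity
  | succ n =>
    rw [iterW_succ_singleton]
    have hrn : 0 ≤ (σ c).length * C * r ^ n := by positivity
    calc ((iterW σ n (σ c)).length : ℝ) ≤ (σ c).length * (C * r ^ n) :=
          length_iterW_le_of_forall_mem σ fun y hy => hC y (h y hy) n
      _ ≤ (1 + (σ c).length * C) * r ^ (n + 1) := by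
          rw [pow_succ]; nlinarith [pow_nonneg (by linarith : (0 : ℝ) ≤ r) n]

open Classical in
noncomputable def expCount (w : List A) : ℕ := w.countP fun c => ¬HasSubexpGrowth σ c

theorem expCount_append (v w : List A) : expCount σ (v ++ w) = expCount σ v + expCount σ w :=
  List.countP_append ..

theorem expCount_le_length (w : List A) : expCount σ w ≤ w.length :=
  List.countP_le_length

theorem expCount_cons_of_hasSubexpGrowth {x : A} (hx : HasSubexpGrowth σ x) (w : List A) :
    expCount σ (x :: w) = expCount σ w := by
  simp [expCount, hx]

theorem expCount_cons_of_not_hasSubexpGrowth {x : A} (hx : ¬HasSubexpGrowth σ x) (w : List A) :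
    expCount σ (x :: w) = expCount σ w + 1 := by
  simp [expCount, hx]

theorem expCount_singleton_of_not_hasSubexpGrowth {x : A} (hx : ¬HasSubexpGrowth σ x) :
    expCount σ [x] = 1 := by
  simp [expCount, hx]

theorem expCount_le_expCount_mapW [Finite A] (w : List A) :
    expCount σ w ≤ expCount σ (mapW σ w) := by
  induction w with
  | nil => simp [expCount, mapW]
  | cons x w ih =>
    rw [mapW_cons, expCount_append]
    by_cases hx : HasSubexpGrowth σ x
    · rw [expCount_cons_of_hasSubexpGrowth σ hx]; omega
    · obtain ⟨y, hy, hy'⟩ := exists_mem_not_hasSubexpGrowth σ hx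
      have : 0 < expCount σ (σ x) := List.countP_pos_iff.2 ⟨y, hy, by simpa using hy'⟩
      rw [expCount_cons_of_not_hasSubexpGrowth σ hx]; omega

theorem monotone_expCount_iterW [Finite A] (w : List A) :
    Monotone fun n => expCount σ (iterW σ n w) :=
  monotone_nat_of_le_succ fun n => by
    simpa only [iterW_succ'] using expCount_le_expCount_mapW σ (iterW σ n w)

theorem length_iterW_le_of_forall_singleton {C r : ℝ} {S n : ℕ}
    (h : ∀ x, ((iterW σ n [x]).length : ℝ) ≤ expCount σ (iterW σ n [x]) +
      C * (r ^ n + S * ∑ j ∈ Finset.range n, r ^ j * expCount σ (iterW σ (n - 1 - j) [x])))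
    (w : List A) :
    ((iterW σ n w).length : ℝ) ≤ expCount σ (iterW σ n w) +
      C * (w.length * r ^ n +
        S * ∑ j ∈ Finset.range n, r ^ j * expCount σ (iterW σ (n - 1 - j) w)) := by
  induction w with
  | nil => simp [iterW_nil, expCount]
  | cons x w ih =>
    have hx := h x
    simp only [iterW_cons σ _ x w, List.length_append, expCount_append, List.length_cons,
      Nat.cast_add, Nat.cast_one, mul_add, Finset.sum_add_distrib] at hx ih ⊢
    linarith

/-- A subexponential letter of `σⁿ(w)` descends, through subexponential letters only, from a
letter of `w` or from a child of an exponential letter of `σ^(n-1-j)(w)`; there are at most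
`S · expCount σ (σ^(n-1-j)(w))` such children, each with at most `C rʲ` descendants. -/
theorem length_iterW_le [Finite A] {C r : ℝ} {S : ℕ} (hC : 0 ≤ C) (hr : 0 ≤ r)
    (hS : ∀ c, (σ c).length ≤ S)
    (hsub : ∀ d, HasSubexpGrowth σ d → ∀ n, ((iterW σ n [d]).length : ℝ) ≤ C * r ^ n)
    (n : ℕ) (w : List A) :
    ((iterW σ n w).length : ℝ) ≤ expCount σ (iterW σ n w) +
      C * (w.length * r ^ n +
        S * ∑ j ∈ Finset.range n, r ^ j * expCount σ (iterW σ (n - 1 - j) w)) := by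
  have hsubexp : ∀ n x, HasSubexpGrowth σ x → ((iterW σ n [x]).length : ℝ) ≤
      expCount σ (iterW σ n [x]) +
        C * (r ^ n +
          S * ∑ j ∈ Finset.range n, r ^ j * expCount σ (iterW σ (n - 1 - j) [x])) := by
    intro n x hx
    have : 0 ≤ C * (S * ∑ j ∈ Finset.range n,
        r ^ j * expCount σ (iterW σ (n - 1 - j) [x])) := by
      positivity
    nlinarith [hsub x hx n, (expCount σ (iterW σ n [x])).cast_nonneg (α := ℝ)]
  induction n generalizing w with
  | zero =>
    refine length_iterW_le_of_forall_singleton σ (fun x => ?_) w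
    by_cases hx : HasSubexpGrowth σ x
    · exact hsubexp 0 x hx
    · simpa [iterW_zero, expCount_singleton_of_not_hasSubexpGrowth σ hx] using hC
  | succ n ih =>
    refine length_iterW_le_of_forall_singleton σ (fun x => ?_) w
    by_cases hx : HasSubexpGrowth σ x
    · exact hsubexp (n + 1) x hx
    have hreindex : ∑ j ∈ Finset.range n, r ^ j * expCount σ (iterW σ (n + 1 - 1 - j) [x]) =
        ∑ j ∈ Finset.range n, r ^ j * expCount σ (iterW σ (n - 1 - j) (σ x)) :=
      Finset.sum_congr rfl fun j hj => by
        rw [show n + 1 - 1 - j = n - 1 - j + 1 by simp at hj; omega, iterW_succ_singleton]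
    have hσx : ((σ x).length : ℝ) * r ^ n ≤ S * r ^ n := by gcongr; exact_mod_cast hS x
    have := ih (σ x)
    rw [Finset.sum_range_succ, hreindex, show n + 1 - 1 - n = 0 by omega, iterW_succ_singleton]
    rw [iterW_zero, expCount_singleton_of_not_hasSubexpGrowth σ hx, Nat.cast_one, mul_one]
    nlinarith [pow_nonneg hr (n + 1)]

theorem exists_two_le_expCount [Finite A] {c : A} (hc : ¬HasSubexpGrowth σ c) :
    ∃ q, 2 ≤ expCount σ (iterW σ q [c]) := by
  by_contra! h
  refine hc fun r hr => ?_
  obtain ⟨S, hS⟩ := Finite.exists_le fun c => (σ c).length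
  obtain ⟨C, hC, hsub⟩ := exists_subexpGrowth_bound σ hr
  refine ⟨1 + C + C * S / (r - 1), fun n => ?_⟩
  have hr1 : 0 < r - 1 := by linarith
  have hsum : ∑ j ∈ Finset.range n, r ^ j * expCount σ (iterW σ (n - 1 - j) [c]) ≤
      r ^ n / (r - 1) :=
    calc _ ≤ ∑ j ∈ Finset.range n, r ^ j := Finset.sum_le_sum fun j _ => by
            have : (expCount σ (iterW σ (n - 1 - j) [c]) : ℝ) ≤ 1 := by
              exact_mod_cast Nat.lt_succ_iff.mp (h _)
            nlinarith [pow_nonneg (hr.le.trans' zero_le_one) j]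
      _ = (r ^ n - 1) / (r - 1) := geom_sum_eq hr.ne' n
      _ ≤ r ^ n / (r - 1) := by gcongr; linarith
  have hlen := length_iterW_le σ hC (by linarith) hS hsub n [c]
  have he : (expCount σ (iterW σ n [c]) : ℝ) ≤ 1 := by exact_mod_cast Nat.lt_succ_iff.mp (h n)
  have hrn : 1 ≤ r ^ n := one_le_pow₀ hr.le
  calc ((iterW σ n [c]).length : ℝ)
      ≤ 1 + C * (r ^ n + S * (r ^ n / (r - 1))) := by
        simp only [List.length_singleton, Nat.cast_one, one_mul] at hlen
        have : C * (S * ∑ j ∈ Finset.range n,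
            r ^ j * expCount σ (iterW σ (n - 1 - j) [c])) ≤ C * (S * (r ^ n / (r - 1))) := by
          gcongr
        linarith
    _ = 1 + (C + C * S / (r - 1)) * r ^ n := by ring
    _ ≤ (1 + C + C * S / (r - 1)) * r ^ n := by
        nlinarith [show 0 ≤ C + C * S / (r - 1) by positivity]

theorem exists_two_mul_expCount_le_iterW [Finite A] :
    ∃ Q, 0 < Q ∧ ∀ w, 2 * expCount σ w ≤ expCount σ (iterW σ Q w) := by
  have hletter : ∀ c, ∀ᶠ n in atTop,
      ¬HasSubexpGrowth σ c → 2 ≤ expCount σ (iterW σ n [c]) := by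
    intro c
    by_cases hc : HasSubexpGrowth σ c
    · exact Eventually.of_forall fun _ h => absurd hc h
    obtain ⟨q, hq⟩ := exists_two_le_expCount σ hc
    filter_upwards [eventually_ge_atTop q] with n hn _
    exact hq.trans (monotone_expCount_iterW σ [c] hn)
  obtain ⟨Q, hQ, hQ0⟩ := ((eventually_all.2 hletter).and (eventually_gt_atTop 0)).exists
  refine ⟨Q, hQ0, fun w => ?_⟩
  induction w with
  | nil => simp [expCount]
  | cons x w ih =>
    rw [iterW_cons, expCount_append]
    by_cases hx : HasSubexpGrowth σ x
    · rw [expCount_cons_of_hasSubexpGrowth σ hx]; omega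
    · rw [expCount_cons_of_not_hasSubexpGrowth σ hx]; have := hQ x hx; omega

theorem pow_mul_le_of_two_mul_le {f : ℕ → ℕ} (hf : Monotone f) {Q : ℕ} (hQ : 0 < Q) {ρ : ℝ}
    (h2 : ∀ j, 2 * f j ≤ f (j + Q)) (hρ : 1 ≤ ρ) (hρQ : ρ ^ Q ≤ 2) (j k : ℕ) :
    ρ ^ k * f j ≤ 2 * f (j + k) := by
  induction k using Nat.strong_induction_on with
  | _ k ih =>
    rcases lt_or_ge k Q with hk | hk
    · calc ρ ^ k * f j ≤ 2 * f j := by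
            gcongr; exact (pow_le_pow_right₀ hρ hk.le).trans hρQ
        _ ≤ 2 * f (j + k) := by gcongr; exact hf (Nat.le_add_right j k)
    · obtain ⟨k, rfl⟩ := Nat.exists_eq_add_of_le' hk
      have hstep : (2 * f (j + k) : ℝ) ≤ f (j + (k + Q)) := by
        rw [← add_assoc]; exact_mod_cast h2 (j + k)
      calc ρ ^ (k + Q) * f j = ρ ^ Q * (ρ ^ k * f j) := by ring
        _ ≤ 2 * (2 * f (j + k)) :=
            mul_le_mul hρQ (ih k (by omega)) (by positivity) zero_le_two
        _ ≤ 2 * f (j + (k + Q)) := by linarith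

theorem exists_expCount_growth [Finite A] :
    ∃ ρ : ℝ, 1 < ρ ∧ ∀ w j k,
      ρ ^ k * expCount σ (iterW σ j w) ≤ 2 * expCount σ (iterW σ (j + k) w) := by
  obtain ⟨Q, hQ, hdouble⟩ := exists_two_mul_expCount_le_iterW σ
  have hρ : 1 < (2 : ℝ) ^ ((Q : ℝ)⁻¹) := Real.one_lt_rpow one_lt_two (by positivity)
  refine ⟨_, hρ, fun w j k => pow_mul_le_of_two_mul_le (monotone_expCount_iterW σ w) hQ
    (fun j => ?_) hρ.le (Real.rpow_inv_natCast_pow zero_le_two hQ.ne').le j k⟩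
  rw [add_comm, iterW_add]
  exact hdouble _

theorem sum_pow_mul_le_of_pow_mul_le {f : ℕ → ℕ} {ρ r : ℝ}
    (hf : ∀ j k, ρ ^ k * f j ≤ 2 * f (j + k)) (hr : 0 ≤ r) (hrρ : r < ρ) (n : ℕ) :
    ∑ j ∈ Finset.range n, r ^ j * f (n - 1 - j) ≤ 2 * f n / (ρ - r) := by
  have hρ : 0 < ρ := hr.trans_lt hrρ
  calc ∑ j ∈ Finset.range n, r ^ j * f (n - 1 - j)
      ≤ ∑ j ∈ Finset.range n, 2 * f n / ρ * (r / ρ) ^ j := Finset.sum_le_sum fun j hj => by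
        have h := hf (n - 1 - j) (j + 1)
        rw [show n - 1 - j + (j + 1) = n by simp at hj; omega] at h
        have hle : (f (n - 1 - j) : ℝ) ≤ 2 * f n / ρ ^ (j + 1) := by
          rw [le_div_iff₀ (by positivity), mul_comm]; exact h
        calc r ^ j * f (n - 1 - j) ≤ r ^ j * (2 * f n / ρ ^ (j + 1)) := by gcongr
          _ = 2 * f n / ρ * (r / ρ) ^ j := by rw [div_pow, pow_succ]; field_simp
    _ = 2 * f n / ρ * ∑ j ∈ Finset.range n, (r / ρ) ^ j := (Finset.mul_sum ..).symm
    _ ≤ 2 * f n / ρ * ((r / ρ) ^ 0 / (1 - r / ρ)) := by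
        gcongr
        rw [Finset.range_eq_Ico]
        exact geom_sum_Ico_le_of_lt_one (by positivity) ((div_lt_one hρ).2 hrρ)
    _ = 2 * f n / (ρ - r) := by
        have : ρ - r ≠ 0 := by linarith
        field_simp

theorem length_iterW_le_mul_expCount_add [Finite A] {ρ r C : ℝ} {S : ℕ}
    (hgrowth : ∀ w j k,
      ρ ^ k * expCount σ (iterW σ j w) ≤ 2 * expCount σ (iterW σ (j + k) w))
    (hr : 0 ≤ r) (hrρ : r < ρ) (hC : 0 ≤ C) (hS : ∀ c, (σ c).length ≤ S)
    (hsub : ∀ d, HasSubexpGrowth σ d → ∀ n, ((iterW σ n [d]).length : ℝ) ≤ C * r ^ n)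
    (n : ℕ) (w : List A) :
    ((iterW σ n w).length : ℝ) ≤
      (1 + 2 * C * S / (ρ - r)) * expCount σ (iterW σ n w) + C * w.length * r ^ n := by
  have hsum := sum_pow_mul_le_of_pow_mul_le (f := fun j => expCount σ (iterW σ j w))
    (fun j k => hgrowth w j k) hr hrρ n
  have hlen := length_iterW_le σ hC hr hS hsub n w
  have : C * (S * ∑ j ∈ Finset.range n, r ^ j * expCount σ (iterW σ (n - 1 - j) w)) ≤
      C * (S * (2 * expCount σ (iterW σ n w) / (ρ - r))) := by gcongr
  have hD : (1 + 2 * C * S / (ρ - r)) * expCount σ (iterW σ n w) =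
      expCount σ (iterW σ n w) + C * (S * (2 * expCount σ (iterW σ n w) / (ρ - r))) := by ring
  linarith

theorem exists_two_mul_length_iterW_le [Finite A] {w : List A}
    (hw : ∃ c ∈ w, ¬HasSubexpGrowth σ c) :
    ∃ K j₀, ∀ j ≥ j₀, 2 * (iterW σ j w).length ≤ (iterW σ (j + K) w).length := by
  obtain ⟨S, hS⟩ := Finite.exists_le fun c => (σ c).length
  obtain ⟨ρ, hρ, hgrowth⟩ := exists_expCount_growth σ
  obtain ⟨r, hr, hrρ⟩ := exists_between hρ
  obtain ⟨C, hC, hsub⟩ := exists_subexpGrowth_bound σ hr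
  set D := 1 + 2 * C * S / (ρ - r)
  have hw : (1 : ℝ) ≤ expCount σ w := by
    obtain ⟨c, hc, hc'⟩ := hw
    exact_mod_cast List.countP_pos_iff.2 ⟨c, hc, by simpa using hc'⟩
  have hdom : ∀ᶠ j in atTop, C * w.length * r ^ j ≤ expCount σ (iterW σ j w) := by
    filter_upwards [(tendsto_pow_atTop_atTop_of_one_lt ((one_lt_div (by linarith)).2 hrρ)
      ).eventually_ge_atTop (2 * C * w.length)] with j hj
    have h := hgrowth w 0 j
    rw [iterW_zero, zero_add] at h
    rw [div_pow, le_div_iff₀ (by positivity)] at hj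
    nlinarith [pow_nonneg (by linarith : (0:ℝ) ≤ ρ) j]
  obtain ⟨K, hK⟩ := pow_unbounded_of_one_lt (4 * (D + 1)) hρ
  obtain ⟨j₀, hj₀⟩ := eventually_atTop.1 hdom
  refine ⟨K, j₀, fun j hj => ?_⟩
  have hlen := length_iterW_le_mul_expCount_add σ hgrowth (by linarith) hrρ hC hS hsub j w
  have he : (0 : ℝ) ≤ expCount σ (iterW σ j w) := Nat.cast_nonneg _
  have hlast : (expCount σ (iterW σ (j + K) w) : ℝ) ≤ (iterW σ (j + K) w).length := by
    exact_mod_cast expCount_le_length σ _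
  suffices (2 * (iterW σ j w).length : ℝ) ≤ (iterW σ (j + K) w).length by exact_mod_cast this
  calc (2 * (iterW σ j w).length : ℝ) ≤ 2 * (D + 1) * expCount σ (iterW σ j w) := by
        linarith [hj₀ j hj]
    _ ≤ ρ ^ K * expCount σ (iterW σ j w) / 2 := by
        linarith [mul_le_mul_of_nonneg_right hK.le he]
    _ ≤ expCount σ (iterW σ (j + K) w) := by linarith [hgrowth w j K]
    _ ≤ (iterW σ (j + K) w).length := hlast

section Spectral

variable [Fintype A] [DecidableEq A]

theorem count_mapW (i : A) (w : List A) :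
    (mapW σ w).count i = ∑ k, w.count k * (σ k).count i := by
  rw [mapW, List.count_flatMap, Finset.sum_list_map_count]
  refine Finset.sum_subset (Finset.subset_univ _) fun k _ hk => ?_
  rw [List.count_eq_zero_of_not_mem (by simpa using hk), zero_smul]

theorem incMat_pow_apply (n : ℕ) (i j : A) :
    (incMat σ ^ n) i j = (iterW σ n [j]).count i := by
  induction n generalizing i with
  | zero =>
    rcases eq_or_ne i j with rfl | h
    · simp [iterW_zero]
    · simp [iterW_zero, h, h.symm]
  | succ n ih =>
    rw [pow_succ', Matrix.mul_apply, iterW_succ', count_mapW]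
    push_cast
    simp only [ih, incMat, mul_comm]

theorem norm_pow_le_sum_length_iterW {μ : ℂ} (hμ : μ ∈ spectrum ℂ (incMat σ)) (n : ℕ) :
    ‖μ‖ ^ n ≤ ∑ j, ((iterW σ n [j]).length : ℝ) := by
  have hμn : Module.End.HasEigenvalue (Matrix.toLin' (incMat σ ^ n)) (μ ^ n) := by
    rw [Module.End.hasEigenvalue_iff_mem_spectrum, Matrix.spectrum_toLin']
    exact spectrum.pow_mem_pow _ n hμ
  obtain ⟨k, hk⟩ := eigenvalue_mem_ball hμn
  calc ‖μ‖ ^ n = ‖μ ^ n‖ := (norm_pow ..).symm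
    _ ≤ ‖(incMat σ ^ n) k k‖ + ∑ j ∈ Finset.univ.erase k, ‖(incMat σ ^ n) k j‖ :=
        norm_le_of_mem_closedBall hk
    _ = ∑ j, ‖(incMat σ ^ n) k j‖ :=
        Finset.add_sum_erase _ (fun j => ‖(incMat σ ^ n) k j‖) (Finset.mem_univ k)
    _ ≤ ∑ j, ((iterW σ n [j]).length : ℝ) := Finset.sum_le_sum fun j _ => by
        rw [incMat_pow_apply, Complex.norm_natCast]
        exact_mod_cast List.count_le_length

theorem exists_not_hasSubexpGrowth (hθ : 1 < specRad σ) : ∃ c, ¬HasSubexpGrowth σ c := by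
  obtain ⟨μ, hμ, hμ1⟩ : ∃ μ ∈ spectrum ℂ (incMat σ), 1 < ‖μ‖ := by
    by_contra! h
    exact hθ.not_ge (Real.sSup_le (by rintro _ ⟨μ, hμ, rfl⟩; exact h μ hμ) zero_le_one)
  by_contra! hsub
  obtain ⟨r, hr, hrμ⟩ := exists_between hμ1
  obtain ⟨C, -, hC⟩ := exists_subexpGrowth_bound σ hr
  obtain ⟨n, hn⟩ := pow_unbounded_of_one_lt (Fintype.card A * C)
    ((one_lt_div (by linarith)).2 hrμ)
  have hsum : ∑ j, ((iterW σ n [j]).length : ℝ) ≤ Fintype.card A * (C * r ^ n) :=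
    calc _ ≤ ∑ _j : A, C * r ^ n := Finset.sum_le_sum fun j _ => hC j (hsub j) n
      _ = _ := by rw [Finset.sum_const, Finset.card_univ, nsmul_eq_mul]
  rw [div_pow, lt_div_iff₀ (by positivity)] at hn
  linarith [norm_pow_le_sum_length_iterW σ hμ n]

end Spectral

section Orbit

variable {L : ℕ → ℕ}

theorem le_apply_of_tendsto_iterate (hL : Monotone L)
    (hunb : Tendsto (fun m => L^[m] 1) atTop atTop) (N : ℕ) : N ≤ L N := by
  rcases Nat.eq_zero_or_pos N with rfl | hN
  · exact Nat.zero_le _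
  by_contra! h
  have hbdd : ∀ m, L^[m] N ≤ N := by
    intro m
    induction m with
    | zero => rfl
    | succ m ih => rw [Function.iterate_succ_apply]; exact (hL.iterate m h.le).trans ih
  obtain ⟨m, hm⟩ := (hunb.eventually_gt_atTop N).exists
  exact hm.not_ge ((hL.iterate m hN).trans (hbdd m))

theorem apply_add_le {S : ℕ} (hS : ∀ N, L (N + 1) ≤ L N + S) (N d : ℕ) :
    L (N + d) ≤ L N + S * d := by
  induction d with
  | zero => simp
  | succ d ih => rw [← add_assoc, mul_add_one]; linarith [hS (N + d)]

theorem iterate_add_le (hL : Monotone L) {S : ℕ} (hS : ∀ N, L (N + 1) ≤ L N + S)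
    (j N d : ℕ) :
    L^[j] (N + d) ≤ L^[j] N + S ^ j * d := by
  induction j with
  | zero => simp
  | succ j ih =>
    rw [Function.iterate_succ_apply', Function.iterate_succ_apply']
    calc L (L^[j] (N + d)) ≤ L (L^[j] N + S ^ j * d) := hL ih
      _ ≤ L (L^[j] N) + S ^ (j + 1) * d := by
          rw [pow_succ', mul_assoc]; exact apply_add_le hS _ _

theorem iterate_le_add_mul_sub (hL : Monotone L) {S : ℕ} (hS : ∀ N, L (N + 1) ≤ L N + S)
    {N : ℕ} (hN : N ≤ L N) (k : ℕ) :
    L^[k] N ≤ N + (∑ j ∈ Finset.range k, S ^ j) * (L N - N) := by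
  induction k with
  | zero => simp
  | succ k ih =>
    have h := iterate_add_le hL hS k N (L N - N)
    rw [Nat.add_sub_cancel' hN, ← Function.iterate_succ_apply] at h
    rw [Finset.sum_range_succ, add_mul]
    linarith

theorem exists_two_mul_lt_iterate (hL : Monotone L)
    (hunb : Tendsto (fun m => L^[m] 1) atTop atTop)
    (hdouble : ∃ K m₀, ∀ m ≥ m₀, 2 * L^[m] 1 ≤ L^[m + K] 1) :
    ∃ K, ∀ᶠ N in atTop, 2 * N < L^[K] N := by
  obtain ⟨K, m₀, hK⟩ := hdouble
  have horbit : Monotone fun m => L^[m] 1 := monotone_nat_of_le_succ fun m => by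
    rw [Function.iterate_succ_apply']; exact le_apply_of_tendsto_iterate hL hunb _
  refine ⟨K + 1, ?_⟩
  filter_upwards [eventually_ge_atTop (L^[m₀] 1), eventually_ge_atTop 1] with N hN hN1
  have hex : ∃ m, N < L^[m + 1] 1 := (hunb.eventually_gt_atTop N).exists_forall_of_atTop.imp
    fun m hm => hm (m + 1) (Nat.le_succ m)
  set m := Nat.find hex
  have hm : N < L^[m + 1] 1 := Nat.find_spec hex
  have hmN : L^[m] 1 ≤ N := by
    rcases Nat.eq_zero_or_pos m with h0 | hpos
    · rw [h0]; exact hN1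
    · obtain ⟨m', hm'⟩ := Nat.exists_eq_add_of_lt hpos
      simpa [hm'] using Nat.find_min hex (show m' < m by omega)
  have hm₀ : m₀ ≤ m + 1 := by
    by_contra! h
    exact hm.not_ge ((horbit h.le).trans hN)
  calc 2 * N < 2 * L^[m + 1] 1 := by omega
    _ ≤ L^[m + 1 + K] 1 := hK _ hm₀
    _ = L^[K + 1] (L^[m] 1) := by rw [← Function.iterate_add_apply]; congr 1; omega
    _ ≤ L^[K + 1] N := hL.iterate _ hmN

theorem one_lt_liminf_div_of_iterate_doubling (hL : Monotone L) {S : ℕ}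
    (hS : ∀ N, L (N + 1) ≤ L N + S) (hunb : Tendsto (fun m => L^[m] 1) atTop atTop)
    (hdouble : ∃ K m₀, ∀ m ≥ m₀, 2 * L^[m] 1 ≤ L^[m + K] 1) :
    1 < atTop.liminf fun N => (L N : ℝ) / N := by
  obtain ⟨K, hK⟩ := exists_two_mul_lt_iterate hL hunb hdouble
  obtain ⟨c, hmain⟩ : ∃ c : ℕ, ∀ᶠ N in atTop, N < c * (L N - N) := by
    refine ⟨∑ j ∈ Finset.range K, S ^ j, ?_⟩
    filter_upwards [hK] with N hN
    have := iterate_le_add_mul_sub hL hS (le_apply_of_tendsto_iterate hL hunb N) K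
    omega
  have hc : (0 : ℝ) < c := by
    obtain ⟨N, hN⟩ := hmain.exists
    exact_mod_cast Nat.pos_of_ne_zero (by rintro rfl; simp at hN)
  have hlow : ∀ᶠ N in atTop, 1 + 1 / (c : ℝ) ≤ (L N : ℝ) / N := by
    filter_upwards [hmain, eventually_ge_atTop 1] with N hN hN1
    have hlt : ((N : ℕ) : ℝ) < ((c * (L N - N) : ℕ) : ℝ) := by exact_mod_cast hN
    rw [Nat.cast_mul, Nat.cast_sub (le_apply_of_tendsto_iterate hL hunb N)] at hlt
    have : (N : ℝ) / c ≤ L N - N := by rw [div_le_iff₀ hc]; linarith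
    rw [le_div_iff₀ (by positivity), add_mul, one_div_mul_eq_div]
    linarith
  have hup : ∀ᶠ N in atTop, (L N : ℝ) / N ≤ L 0 + S := by
    filter_upwards [eventually_ge_atTop 1] with N hN1
    have h := apply_add_le hS 0 N
    rw [zero_add] at h
    rw [div_le_iff₀ (by positivity)]
    have : (L N : ℝ) ≤ L 0 + S * N := by exact_mod_cast h
    have : (1 : ℝ) ≤ N := by exact_mod_cast hN1
    nlinarith [(L 0).cast_nonneg (α := ℝ)]
  calc (1 : ℝ) < 1 + 1 / c := by simpa using hc
    _ ≤ _ := le_liminf_of_le (isCoboundedUnder_ge_of_eventually_le _ hup) hlow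

end Orbit

section Prefix

variable (u : ℕ → A)

def imagePrefixLength (N : ℕ) : ℕ := (mapW σ (List.ofFn fun i : Fin N => u i)).length

theorem imagePrefixLength_succ (N : ℕ) :
    imagePrefixLength σ u (N + 1) = imagePrefixLength σ u N + (σ (u N)).length := by
  rw [imagePrefixLength, imagePrefixLength, List.ofFn_succ_last, mapW_append, mapW_singleton,
    List.length_append]
  rfl

theorem monotone_imagePrefixLength : Monotone (imagePrefixLength σ u) :=
  monotone_nat_of_le_succ fun N => by rw [imagePrefixLength_succ]; exact Nat.le_add_right _ _

theorem imagePrefixLength_succ_le {S : ℕ} (hS : ∀ c, (σ c).length ≤ S) (N : ℕ) :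
    imagePrefixLength σ u (N + 1) ≤ imagePrefixLength σ u N + S := by
  rw [imagePrefixLength_succ]; exact Nat.add_le_add_left (hS _) _

theorem ofFn_eq_of_isPrefOf {w : List A} (h : IsPrefOf w u) :
    List.ofFn (fun i : Fin w.length => u i) = w := by
  conv_rhs => rw [← List.ofFn_get w]
  exact congrArg List.ofFn (funext fun i => (h i).symm)

theorem iterate_imagePrefixLength_one {a : A} (hu : ∀ n, IsPrefOf (iterW σ n [a]) u) (m : ℕ) :
    (imagePrefixLength σ u)^[m] 1 = (iterW σ m [a]).length := by
  induction m with
  | zero => rfl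
  | succ m ih =>
    rw [Function.iterate_succ_apply', ih, iterW_succ', imagePrefixLength,
      ofFn_eq_of_isPrefOf u (hu m)]

end Prefix

end DilationFactor

open DilationFactor

/-- if the spectral radius of the incidence matrix of `σ` exceeds 1,
then the dilation factor `liminf |σ(u₁⋯u_N)|/N` exceeds 1. -/
theorem stmt_13 {A : Type*} [Fintype A] [DecidableEq A] (σ : A → List A) (a : A)
    (hpro : Prolongable σ a)
    (u : ℕ → A) (hu : ∀ n : ℕ, IsPrefOf (iterW σ n [a]) u)
    (hall : ∀ c : A, ∃ i : ℕ, u i = c)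
    (hθ : 1 < specRad σ) :
    1 < Filter.atTop.liminf fun N : ℕ =>
      ((mapW σ (List.ofFn fun i : Fin N => u i)).length : ℝ) / (N : ℝ) := by
  obtain ⟨S, hS⟩ := Finite.exists_le fun c => (σ c).length
  have hℓ := iterate_imagePrefixLength_one σ u hu
  have hunb : Tendsto (fun m => (imagePrefixLength σ u)^[m] 1) atTop atTop := by
    simpa only [hℓ] using hpro.2
  obtain ⟨c, hc⟩ := exists_not_hasSubexpGrowth σ hθ
  obtain ⟨i, rfl⟩ := hall c
  obtain ⟨m₁, hm₁⟩ := (hpro.2.eventually_gt_atTop i).exists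
  have hmem : u i ∈ iterW σ m₁ [a] := hu m₁ ⟨i, hm₁⟩ ▸ List.get_mem _ _
  obtain ⟨K, j₀, hK⟩ := exists_two_mul_length_iterW_le σ ⟨u i, hmem, hc⟩
  change 1 < atTop.liminf fun N => (imagePrefixLength σ u N : ℝ) / N
  refine one_lt_liminf_div_of_iterate_doubling (monotone_imagePrefixLength σ u)
    (imagePrefixLength_succ_le σ u hS) hunb ⟨K, j₀ + m₁, fun m hm => ?_⟩
  obtain ⟨j, rfl⟩ : ∃ j, m = j + m₁ := ⟨m - m₁, by omega⟩
  rw [hℓ, hℓ, add_right_comm, iterW_add, iterW_add]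
  exact hK j (by omega)
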